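/- arXiv:2506.09471 — 5 statements merged into one kernel-verified Lean document; each statement's English description precedes it below -/
import Mathlib

section
/- The set {u ∈ M₂(ℍ) : uᴴ = −u and u·v = v·u}, i.e. the centralizer of v inside the real Lie algebra sp(2) of anti-self-adjoint 2×2 quaternionic matrices, is a real subspace of M₂(ℍ) of dimension 4. -/
/-!
An element of `ℍ` commutes with `i` exactly when its `j`- and `k`-parts vanish, i.e. when it lies
in `ℂ = ℝ + ℝi`. Hence the matrices commuting with `v = diag(i, i)` are those with complex entries,
and among them the anti-self-adjoint ones form `u(2)`: a matrix `!![a i, z; -z̄, b i]` with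
`a, b ∈ ℝ` and `z ∈ ℂ`, which gives four real parameters.
-/

open Matrix

/-- The quaternion imaginary unit `i`. -/
noncomputable def qi : Quaternion ℝ := ⟨0, 1, 0, 0⟩

/-- `v = diag(i, i) ∈ M₂(ℍ)`. -/
noncomputable def vmat : Matrix (Fin 2) (Fin 2) (Quaternion ℝ) :=
  Matrix.diagonal (fun _ => qi)

open scoped Quaternion

@[simp] lemma qi_re : qi.re = 0 := rfl
@[simp] lemma qi_imI : qi.imI = 1 := rfl
@[simp] lemma qi_imJ : qi.imJ = 0 := rfl
@[simp] lemma qi_imK : qi.imK = 0 := rfl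

theorem commute_qi_iff (q : ℍ[ℝ]) : Commute q qi ↔ q.imJ = 0 ∧ q.imK = 0 := by
  simp only [commute_iff_eq, Quaternion.ext_iff, Quaternion.re_mul, Quaternion.imI_mul,
    Quaternion.imJ_mul, Quaternion.imK_mul, qi_re, qi_imI, qi_imJ, qi_imK]
  constructor
  · rintro ⟨-, -, hJ, hK⟩
    constructor <;> linarith
  · rintro ⟨hJ, hK⟩
    simp [hJ, hK]

theorem Matrix.commute_diagonal_const_iff {n α : Type*} [Fintype n] [DecidableEq n] [Semiring α]
    (u : Matrix n n α) (q : α) :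
    Commute u (diagonal fun _ => q) ↔ ∀ i j, Commute (u i j) q := by
  simp only [commute_iff_eq, mul_diagonal, diagonal_mul, ← Matrix.ext_iff]

theorem Matrix.conjTranspose_eq_neg_iff {n α : Type*} [AddGroup α] [StarAddMonoid α]
    (u : Matrix n n α) : uᴴ = -u ↔ ∀ i j, star (u j i) = -u i j := by
  simp only [← Matrix.ext_iff, conjTranspose_apply, neg_apply]

instance {R : Type*} [CommRing R] [Star R] [TrivialStar R] : StarModule R ℍ[R] where
  star_smul r a := by rw [Quaternion.star_smul, star_trivial r]

noncomputable def sp2Centralizer : Submodule ℝ (Matrix (Fin 2) (Fin 2) ℍ[ℝ]) :=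
  skewAdjoint.submodule ℝ _ ⊓ Subalgebra.toSubmodule (Subalgebra.centralizer ℝ {vmat})

lemma coe_sp2Centralizer :
    (sp2Centralizer : Set (Matrix (Fin 2) (Fin 2) ℍ[ℝ])) =
      {u | uᴴ = -u ∧ u * vmat = vmat * u} := by
  ext u
  simp only [sp2Centralizer, Submodule.coe_inf, Set.mem_inter_iff, SetLike.mem_coe,
    Subalgebra.mem_toSubmodule, Subalgebra.mem_centralizer_iff]
  simp [skewAdjoint.submodule, skewAdjoint.mem_iff, star_eq_conjTranspose,
    eq_comm (a := vmat * u)]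

lemma mem_sp2Centralizer_iff (u : Matrix (Fin 2) (Fin 2) ℍ[ℝ]) :
    u ∈ sp2Centralizer ↔
      (∀ i j, star (u j i) = -u i j) ∧ ∀ i j, (u i j).imJ = 0 ∧ (u i j).imK = 0 := by
  rw [← SetLike.mem_coe, coe_sp2Centralizer, Set.mem_ofPred_eq, conjTranspose_eq_neg_iff,
    ← commute_iff_eq, vmat, commute_diagonal_const_iff]
  simp only [commute_qi_iff]

noncomputable def centralizerParam : (Fin 4 → ℝ) →ₗ[ℝ] Matrix (Fin 2) (Fin 2) ℍ[ℝ] where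
  toFun c := !![c 0 • qi, (c 2 : ℍ[ℝ]) + c 3 • qi; -(c 2 : ℍ[ℝ]) + c 3 • qi, c 1 • qi]
  map_add' c d := by
    ext i j <;> fin_cases i <;> fin_cases j <;> simp [add_comm]
  map_smul' r c := by
    ext i j <;> fin_cases i <;> fin_cases j <;> simp

lemma centralizerParam_apply (c : Fin 4 → ℝ) :
    centralizerParam c =
      !![c 0 • qi, (c 2 : ℍ[ℝ]) + c 3 • qi; -(c 2 : ℍ[ℝ]) + c 3 • qi, c 1 • qi] :=
  rfl

lemma centralizerParam_mem (c : Fin 4 → ℝ) : centralizerParam c ∈ sp2Centralizer := by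
  rw [mem_sp2Centralizer_iff, centralizerParam_apply]
  constructor <;> intro i j <;> fin_cases i <;> fin_cases j <;> simp [Quaternion.ext_iff]

def centralizerCoords (u : Matrix (Fin 2) (Fin 2) ℍ[ℝ]) : Fin 4 → ℝ :=
  ![(u 0 0).imI, (u 1 1).imI, (u 0 1).re, (u 0 1).imI]

lemma centralizerCoords_param (c : Fin 4 → ℝ) :
    centralizerCoords (centralizerParam c) = c := by
  ext k; fin_cases k <;> simp [centralizerCoords, centralizerParam_apply]

lemma centralizerParam_injective : Function.Injective centralizerParam :=
  Function.LeftInverse.injective centralizerCoords_param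

lemma centralizerParam_coords {u : Matrix (Fin 2) (Fin 2) ℍ[ℝ]} (hu : u ∈ sp2Centralizer) :
    centralizerParam (centralizerCoords u) = u := by
  obtain ⟨hskew, hcomplex⟩ := (mem_sp2Centralizer_iff u).1 hu
  have hre i j : (u j i).re = -(u i j).re := by simpa using congrArg (·.re) (hskew i j)
  have himI i j : (u j i).imI = (u i j).imI := by simpa using congrArg (·.imI) (hskew i j)
  have hdiag i : (u i i).re = 0 := by linarith [hre i i]
  rw [centralizerParam_apply]
  ext i j <;> fin_cases i <;> fin_cases j <;>
    simp [centralizerCoords, hcomplex, hdiag, hre 0 1, himI 0 1]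

lemma sp2Centralizer_eq_range : sp2Centralizer = LinearMap.range centralizerParam := by
  ext u
  refine ⟨fun hu => ⟨centralizerCoords u, centralizerParam_coords hu⟩, ?_⟩
  rintro ⟨c, rfl⟩
  exact centralizerParam_mem c

lemma finrank_sp2Centralizer : Module.finrank ℝ sp2Centralizer = 4 := by
  rw [sp2Centralizer_eq_range, LinearMap.finrank_range_of_inj centralizerParam_injective,
    Module.finrank_fin_fun]

/-- the centralizer of `v = diag(i,i)` inside the real Lie algebra
`sp(2) = {u ∈ M₂(ℍ) : uᴴ = −u}` is a real subspace of `M₂(ℍ)` of dimension `4`. -/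
theorem centralizer_v_in_sp2_is_fourDimensional :
    ∃ S : Submodule ℝ (Matrix (Fin 2) (Fin 2) (Quaternion ℝ)),
      (S : Set (Matrix (Fin 2) (Fin 2) (Quaternion ℝ)))
          = {u | uᴴ = -u ∧ u * vmat = vmat * u} ∧
      Module.finrank ℝ S = 4 :=
  ⟨sp2Centralizer, coe_sp2Centralizer, finrank_sp2Centralizer⟩
end

section
/- For every g ∈ Sp(2), there exist h ∈ Sp(2) and real numbers θ₁, θ₂ such that h·g·hᴴ = diag(E(θ₁), E(θ₂)). (Every element of Sp(2) is conjugate in Sp(2) to an element of the standard maximal torus of diagonal matrices with entries of the form cos θ + (sin θ)·i.) -/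
open Matrix

/-- `E θ = cos θ + (sin θ)·i`, the exponential of `θ·i` in the quaternions. -/
noncomputable def E (θ : ℝ) : Quaternion ℝ := ⟨Real.cos θ, Real.sin θ, 0, 0⟩

/-!
Letting `ℂ ⊂ ℍ` act on `ℍ²` by right multiplication makes `ℍ²` a finite-dimensional complex
vector space on which `g` acts `ℂ`-linearly, so `g` has a right eigenvector: `g v = v μ` with
`μ ∈ ℂ`. Normalise `v` and complete it to a unitary matrix `U` with first column `v`; then
`Uᴴ g U` is unitary with vanishing lower-left entry, and in a unitary `2 × 2` matrix this forces
the upper-right entry to vanish too. Thus `g` is conjugate to a diagonal matrix of unit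
quaternions, and each unit quaternion is conjugate by a unit to a unit complex number
`cos θ + (sin θ)·i`.
-/

open Quaternion

theorem Unitary.mem_iff_star_mul_self_of_isDedekindFiniteMonoid {R : Type*} [Monoid R]
    [StarMul R] [IsDedekindFiniteMonoid R] {U : R} : U ∈ unitary R ↔ star U * U = 1 :=
  ⟨fun h => (Unitary.mem_iff.mp h).1, fun h => Unitary.mem_iff.mpr ⟨h, mul_eq_one_comm.mp h⟩⟩

theorem Unitary.mem_iff_self_mul_star_of_isDedekindFiniteMonoid {R : Type*} [Monoid R]
    [StarMul R] [IsDedekindFiniteMonoid R] {U : R} : U ∈ unitary R ↔ U * star U = 1 :=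
  ⟨fun h => (Unitary.mem_iff.mp h).2, fun h => Unitary.mem_iff.mpr ⟨mul_eq_one_comm.mp h, h⟩⟩

namespace Matrix

variable {n R : Type*}

theorem mul_mul_apply_of_mulVec_eq {l m q : Type*} [Fintype m] [Semiring R]
    {V : Matrix l m R} {g : Matrix m m R} {U : Matrix m q R} {j : q} {c : R}
    (h : g *ᵥ Uᵀ j = fun k => Uᵀ j k * c) (i : l) : (V * g * U) i j = (V * U) i j * c := by
  rw [Matrix.mul_assoc, mul_apply, mul_apply, Finset.sum_mul]
  refine Finset.sum_congr rfl fun k _ => ?_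
  change V i k * (g *ᵥ Uᵀ j) k = _
  rw [h, mul_assoc]
  rfl

theorem diagonal_mem_unitary_iff [Fintype n] [DecidableEq n] [Semiring R] [StarRing R]
    {d : n → R} : diagonal d ∈ unitary (Matrix n n R) ↔ ∀ i, d i ∈ unitary R := by
  simp only [Unitary.mem_iff, star_eq_conjTranspose, diagonal_conjTranspose,
    diagonal_mul_diagonal, ← diagonal_one, diagonal_eq_diagonal_iff, forall_and]
  rfl

theorem eq_diagonal_of_mem_unitary_of_apply_one_zero [DivisionRing R] [StarRing R]
    {A : Matrix (Fin 2) (Fin 2) R} (hA : A ∈ unitary (Matrix (Fin 2) (Fin 2) R))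
    (h : A 1 0 = 0) : A = diagonal ![A 0 0, A 1 1] := by
  have hAA := Unitary.star_mul_self_of_mem hA
  have h00 : star (A 0 0) * A 0 0 = 1 := by
    simpa [mul_apply, h] using congrFun (congrFun hAA 0) 0
  have h01 : star (A 0 0) * A 0 1 = 0 := by
    simpa [mul_apply, h] using congrFun (congrFun hAA 0) 1
  have h01' : A 0 1 = 0 := (mul_eq_zero.mp h01).resolve_left (left_ne_zero_of_mul_eq_one h00)
  ext i j
  fin_cases i <;> fin_cases j <;> simp [h, h01']

end Matrix

namespace Quaternion

theorem self_mul_star_eq_norm_sq (a : ℍ) : a * star a = ((‖a‖ ^ 2 : ℝ) : ℍ) := by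
  rw [self_mul_star, normSq_eq_norm_mul_self, sq]

theorem star_mul_self_eq_norm_sq (a : ℍ) : star a * a = ((‖a‖ ^ 2 : ℝ) : ℍ) := by
  rw [star_mul_self, normSq_eq_norm_mul_self, sq]

theorem mem_unitary_iff_norm_eq_one {u : ℍ} : u ∈ unitary ℍ ↔ ‖u‖ = 1 := by
  rw [Unitary.mem_iff_star_mul_self_of_isDedekindFiniteMonoid, star_mul_self_eq_norm_sq,
    ← coe_one, coe_inj, pow_eq_one_iff_of_nonneg (norm_nonneg u) two_ne_zero]

theorem norm_coeComplex (z : ℂ) : ‖(z : ℍ)‖ = ‖z‖ := by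
  rw [← sq_eq_sq₀ (norm_nonneg _) (norm_nonneg _), sq, ← normSq_eq_norm_mul_self,
    Complex.sq_norm, Complex.normSq_apply, normSq_def']
  simp [sq]

theorem coeComplex_eq_E_arg {z : ℂ} (hz : ‖z‖ = 1) : (z : ℍ) = E z.arg := by
  ext <;> simp [E, ← Complex.norm_mul_cos_arg z, ← Complex.norm_mul_sin_arg z, hz]

theorem exists_ne_zero_mul_eq_coeComplex_mul (q : ℍ) : ∃ w ≠ 0, ∃ z : ℂ, w * q = z * w := by
  have hs : ‖q.im‖ ^ 2 = q.imI ^ 2 + q.imJ ^ 2 + q.imK ^ 2 := by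
    rw [sq, ← normSq_eq_norm_mul_self, normSq_def']
    simp
  -- `‖q.im‖ i` and `q.im` both square to `-‖q.im‖²`, so their sum intertwines them.
  by_cases hw : ((⟨0, ‖q.im‖⟩ : ℂ) : ℍ) + q.im = 0
  · refine ⟨1, one_ne_zero, ⟨q.re, q.imI⟩, ?_⟩
    have hJ : q.imJ = 0 := by simpa using congrArg QuaternionAlgebra.imJ hw
    have hK : q.imK = 0 := by simpa using congrArg QuaternionAlgebra.imK hw
    ext <;> simp [hJ, hK]
  · refine ⟨_, hw, ⟨q.re, ‖q.im‖⟩, ?_⟩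
    ext <;> simp
    · linear_combination hs
    all_goals ring

theorem exists_mem_unitary_mul_mul_star_eq_coeComplex (q : ℍ) :
    ∃ u ∈ unitary ℍ, ∃ z : ℂ, u * q * star u = z := by
  obtain ⟨w, hw, z, hwq⟩ := exists_ne_zero_mul_eq_coeComplex_mul q
  have hw' : ‖w‖ ≠ 0 := norm_ne_zero_iff.mpr hw
  refine ⟨‖w‖⁻¹ • w, ?_, z, ?_⟩
  · rw [mem_unitary_iff_norm_eq_one, norm_smul, norm_inv, norm_norm, inv_mul_cancel₀ hw']
  · rw [star_smul, smul_mul_assoc, smul_mul_assoc, mul_smul_comm, smul_smul, hwq, mul_assoc,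
      self_mul_star, ← mul_smul_comm, smul_coe, normSq_eq_norm_mul_self,
      show ‖w‖⁻¹ * ‖w‖⁻¹ * (‖w‖ * ‖w‖) = 1 by field_simp, coe_one, mul_one]

theorem exists_mem_unitary_mul_mul_star_eq_E {q : ℍ} (hq : q ∈ unitary ℍ) :
    ∃ u ∈ unitary ℍ, ∃ θ, u * q * star u = E θ := by
  obtain ⟨u, hu, z, hz⟩ := exists_mem_unitary_mul_mul_star_eq_coeComplex q
  have hz1 : ‖z‖ = 1 := by
    rw [← norm_coeComplex, ← hz]
    exact CStarRing.norm_of_mem_unitary (mul_mem (mul_mem hu hq) (Unitary.star_mem hu))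
  exact ⟨u, hu, z.arg, hz.trans (coeComplex_eq_E_arg hz1)⟩

theorem star_dotProduct_self {n : Type*} [Fintype n] (v : n → ℍ) :
    star v ⬝ᵥ v = ((∑ i, ‖v i‖ ^ 2 : ℝ) : ℍ) := by
  simp only [dotProduct, Pi.star_apply, star_mul_self_eq_norm_sq]
  exact (map_sum (algebraMap ℝ ℍ) _ _).symm

end Quaternion

section RightComplexStructure

variable {n : Type*}

@[reducible] noncomputable def rightComplexModule : Module ℂ (n → ℍ) :=
  Module.compHom _ (ofComplex.toRingHom.toOpposite fun z w => (Commute.all z w).map _)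

attribute [local instance] rightComplexModule

theorem rightComplexModule_smul_apply (z : ℂ) (v : n → ℍ) (i : n) : (z • v) i = v i * z := rfl

theorem isScalarTower_rightComplexModule : IsScalarTower ℝ ℂ (n → ℍ) :=
  ⟨fun r z v => funext fun i => by
    rw [rightComplexModule_smul_apply, Pi.smul_apply, rightComplexModule_smul_apply,
      Complex.real_smul, coeComplex_mul, coeComplex_coe, coe_mul_eq_smul, mul_smul_comm]⟩

attribute [local instance] isScalarTower_rightComplexModule

variable [Fintype n]

theorem finite_rightComplexModule : Module.Finite ℂ (n → ℍ) :=
  .of_restrictScalars_finite ℝ ℂ _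

attribute [local instance] finite_rightComplexModule

noncomputable def Matrix.mulVecComplexLinear (g : Matrix n n ℍ) : Module.End ℂ (n → ℍ) where
  toFun := g.mulVec
  map_add' := g.mulVec_add
  map_smul' z v := g.mulVec_smul (MulOpposite.op (z : ℍ)) v

theorem Matrix.exists_mulVec_eq_mul_coeComplex [Nonempty n] (g : Matrix n n ℍ) :
    ∃ v ≠ 0, ∃ μ : ℂ, g *ᵥ v = fun i => v i * μ := by
  obtain ⟨μ, hμ⟩ := g.mulVecComplexLinear.exists_eigenvalue
  obtain ⟨v, hv⟩ := hμ.exists_hasEigenvector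
  exact ⟨v, hv.2, μ, hv.apply_eq_smul⟩

end RightComplexStructure

namespace Matrix

theorem exists_star_dotProduct_self_eq_one_of_mulVec_eq_mul {n : Type*} [Fintype n]
    (g : Matrix n n ℍ) {v : n → ℍ} (hv : v ≠ 0) {μ : ℍ} (hgv : g *ᵥ v = fun i => v i * μ) :
    ∃ v', star v' ⬝ᵥ v' = 1 ∧ g *ᵥ v' = fun i => v' i * μ := by
  have hS : 0 < ∑ i, ‖v i‖ ^ 2 := by
    obtain ⟨i, hi⟩ := Function.ne_iff.mp hv
    exact Finset.sum_pos' (fun _ _ => by positivity) ⟨i, Finset.mem_univ _, by positivity⟩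
  refine ⟨(√(∑ i, ‖v i‖ ^ 2))⁻¹ • v, ?_, ?_⟩
  · rw [star_dotProduct_self]
    simp only [Pi.smul_apply, norm_smul, mul_pow, ← Finset.mul_sum, Real.norm_eq_abs, sq_abs,
      inv_pow, Real.sq_sqrt hS.le]
    exact congrArg _ (inv_mul_cancel₀ hS.ne')
  · rw [mulVec_smul, hgv]
    funext i
    simp

theorem exists_mem_unitary_transpose_zero_eq {v : Fin 2 → ℍ} (hv : star v ⬝ᵥ v = 1) :
    ∃ U ∈ unitary (Matrix (Fin 2) (Fin 2) ℍ), Uᵀ 0 = v := by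
  rw [star_dotProduct_self, ← coe_one, coe_inj, Fin.sum_univ_two] at hv
  by_cases ha : v 0 = 0
  · refine ⟨!![0, 1; v 1, 0], ?_, ?_⟩
    · rw [Unitary.mem_iff_star_mul_self_of_isDedekindFiniteMonoid]
      have hv1 : ‖v 1‖ ^ 2 = 1 := by simpa [ha] using hv
      ext i j : 1
      fin_cases i <;> fin_cases j <;> simp [mul_apply]
      rw [star_mul_self_eq_norm_sq, hv1, coe_one]
    · funext i
      fin_cases i <;> simp [ha]
  · have hr : ‖v 0‖ ≠ 0 := norm_ne_zero_iff.mpr ha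
    refine ⟨!![v 0, -(‖v 0‖⁻¹ • (v 0 * star (v 1))); v 1, (‖v 0‖ : ℍ)], ?_, ?_⟩
    · rw [Unitary.mem_iff_self_mul_star_of_isDedekindFiniteMonoid]
      ext i j : 1
      fin_cases i <;> fin_cases j <;> simp [mul_apply]
      · rw [mul_assoc (v 0), ← mul_assoc (star (v 1)), star_mul_self_eq_norm_sq, ← mul_assoc,
          ← coe_commutes, mul_assoc, self_mul_star_eq_norm_sq, ← coe_mul, smul_smul, smul_coe,
          ← coe_add, ← coe_one]
        congr 1
        field_simp
        linarith
      · rw [mul_coe_eq_smul, smul_smul, inv_mul_cancel₀ hr, one_smul, add_neg_cancel]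
      · rw [coe_mul_eq_smul, smul_smul, inv_mul_cancel₀ hr, one_smul, add_neg_cancel]
      · rw [self_mul_star_eq_norm_sq, ← coe_mul, ← coe_add, ← coe_one, ← sq, add_comm, hv]
    · funext i
      fin_cases i <;> simp

end Matrix

/-- every `g ∈ Sp(2) = {g : gᴴ g = 1}` is conjugate in `Sp(2)` to an element
`diag(E θ₁, E θ₂)` of the standard maximal torus. -/
theorem sp2_conjugate_to_maximalTorus
    (g : Matrix (Fin 2) (Fin 2) (Quaternion ℝ)) (hg : gᴴ * g = 1) :
    ∃ h : Matrix (Fin 2) (Fin 2) (Quaternion ℝ), hᴴ * h = 1 ∧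
      ∃ θ₁ θ₂ : ℝ, h * g * hᴴ = Matrix.diagonal ![E θ₁, E θ₂] := by
  have hg : g ∈ unitary _ := Unitary.mem_iff_star_mul_self_of_isDedekindFiniteMonoid.mpr hg
  obtain ⟨v₀, hv₀, μ, hgv₀⟩ := g.exists_mulVec_eq_mul_coeComplex
  obtain ⟨v, hv, hgv⟩ := g.exists_star_dotProduct_self_eq_one_of_mulVec_eq_mul hv₀ hgv₀
  obtain ⟨U, hU, rfl⟩ := exists_mem_unitary_transpose_zero_eq hv
  set A := star U * g * U with hA_def
  have hA : A ∈ unitary _ := mul_mem (mul_mem (Unitary.star_mem hU) hg) hU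
  have hA10 : A 1 0 = 0 := by
    rw [hA_def, mul_mul_apply_of_mulVec_eq hgv, Unitary.star_mul_self_of_mem hU]
    simp
  have hA_diag := eq_diagonal_of_mem_unitary_of_apply_one_zero hA hA10
  choose u hu θ hθ using fun i =>
    exists_mem_unitary_mul_mul_star_eq_E (diagonal_mem_unitary_iff.mp (hA_diag ▸ hA) i)
  have hP : diagonal u * star U ∈ unitary _ :=
    mul_mem (diagonal_mem_unitary_iff.mpr hu) (Unitary.star_mem hU)
  refine ⟨_, Unitary.star_mul_self_of_mem hP, θ 0, θ 1, ?_⟩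
  calc diagonal u * star U * g * (diagonal u * star U)ᴴ = diagonal u * A * star (diagonal u) := by
        simp only [hA_def, ← star_eq_conjTranspose, star_mul, star_star, Matrix.mul_assoc]
    _ = diagonal ![E (θ 0), E (θ 1)] := by
        rw [hA_diag, star_eq_conjTranspose, diagonal_conjTranspose, diagonal_mul_diagonal,
          diagonal_mul_diagonal]
        congr 1
        funext i
        fin_cases i
        exacts [hθ 0, hθ 1]
end

section
/- Let g ∈ M₂(ℍ) be invertible and let α, β, w ∈ ℍ satisfy g·diag(α, β)·g⁻¹ = diag(w, w). Then re(α) = re(β) = re(w) and ‖α‖ = ‖β‖ = ‖w‖; i.e. both α and β are conjugate in ℍ to w. -/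
private lemma quat_re_mul_comm (x y : Quaternion ℝ) : (x * y).re = (y * x).re := by
  simp [Quaternion.re_mul]; ring

private lemma quat_conj_aux {q a w : Quaternion ℝ} (hq : q ≠ 0) (h : q * a = w * q) :
    a.re = w.re ∧ ‖a‖ = ‖w‖ := by
  have ha : a = q⁻¹ * (w * q) := by
    rw [← h, ← mul_assoc, inv_mul_cancel₀ hq, one_mul]
  constructor
  · rw [ha, quat_re_mul_comm, mul_assoc, mul_inv_cancel₀ hq, mul_one]
  · rw [ha, norm_mul, norm_mul, norm_inv]
    have : ‖q‖ ≠ 0 := norm_ne_zero_iff.mpr hq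
    field_simp

/-- if `g ∈ M₂(ℍ)` is invertible and `g · diag(α, β) · g⁻¹ = diag(w, w)`,
then `re(α) = re(β) = re(w)` and `‖α‖ = ‖β‖ = ‖w‖`, i.e. both `α` and `β` are conjugate
in `ℍ` to `w`. -/
theorem eigenvalues_of_conjugated_diagonal
    (g : (Matrix (Fin 2) (Fin 2) (Quaternion ℝ))ˣ) (α β w : Quaternion ℝ)
    (h : g.val * Matrix.diagonal ![α, β] * (g⁻¹).val = Matrix.diagonal ![w, w]) :
    (α.re = w.re ∧ β.re = w.re) ∧ (‖α‖ = ‖w‖ ∧ ‖β‖ = ‖w‖) := by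
  have h' : g.val * Matrix.diagonal ![α, β] = Matrix.diagonal ![w, w] * g.val := by
    calc g.val * Matrix.diagonal ![α, β]
        = (g.val * Matrix.diagonal ![α, β] * (g⁻¹).val) * g.val := by
          rw [mul_assoc, Units.inv_mul, mul_one]
      _ = Matrix.diagonal ![w, w] * g.val := by rw [h]
  have hentry : ∀ i j : Fin 2, g.val i j * (![α, β] j) = w * g.val i j := by
    intro i j
    have hw : ![w, w] i = w := by fin_cases i <;> rfl
    have := congrFun (congrFun h' i) j
    rw [Matrix.mul_diagonal, Matrix.diagonal_mul, hw] at this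
    exact this
  have hcol : ∀ j : Fin 2, ∃ i : Fin 2, g.val i j ≠ 0 := by
    intro j
    by_contra hc
    push_neg at hc
    have h1 : ((g⁻¹).val * g.val) j j = 1 := by
      rw [Units.inv_mul, Matrix.one_apply_eq]
    rw [Matrix.mul_apply] at h1
    simp only [hc, mul_zero, Finset.sum_const_zero] at h1
    exact zero_ne_one h1
  obtain ⟨i₀, hi₀⟩ := hcol 0
  obtain ⟨i₁, hi₁⟩ := hcol 1
  have hα := quat_conj_aux hi₀ (by simpa using hentry i₀ 0)
  have hβ := quat_conj_aux hi₁ (by simpa using hentry i₁ 1)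
  exact ⟨⟨hα.1, hβ.1⟩, hα.2, hβ.2⟩
end

section
/- Let t₀ ∈ (0, π), let a ≥ b ≥ 0 be real numbers with a² + b² = 2, let t₁ ≥ 0, and let g ∈ Sp(2) satisfy g·diag(E(a·t₁), E(b·t₁))·gᴴ = diag(E(t₀), E(t₀)). Then t₁ ≥ t₀. -/
open Matrix Real

/-!
Since `gᴴ g = 1`, the hypothesis says `g · diag(E(a t₁), E(b t₁)) = E(t₀) · g`. Reading this in
a nonzero entry `q` of the second column of `g` gives `q · E(b t₁) · q⁻¹ = E(t₀)`, and conjugate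
quaternions have the same real part, so `cos (b t₁) = cos t₀`. If `t₁ < t₀`, then
`0 ≤ b t₁ ≤ t₁ < t₀ < π` because `b ≤ 1`, contradicting injectivity of `cos` on `[0, π]`.
-/

namespace Quaternion

theorem re_mul_comm {R : Type*} [CommRing R] (a b : ℍ[R]) : (a * b).re = (b * a).re := by
  simp only [re_mul]
  ring

theorem re_eq_of_mul_eq_mul {R : Type*} [Field R] [LinearOrder R] [IsStrictOrderedRing R]
    {q x y : ℍ[R]} (hq : q ≠ 0) (h : q * x = y * q) : x.re = y.re := by
  have hy : y = q * (x * q⁻¹) := by rw [← mul_assoc, h, mul_inv_cancel_right₀ hq]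
  rw [hy, re_mul_comm, inv_mul_cancel_right₀ hq]

end Quaternion

theorem mul_eq_mul_of_mul_mul_eq {M : Type*} [Monoid M] {u v d d' : M} (hvu : v * u = 1)
    (h : u * d * v = d') : u * d = d' * u := by
  rw [← h, mul_assoc (u * d), hvu, mul_one]

theorem Matrix.exists_apply_ne_zero_of_mul_eq_one {n R : Type*} [Fintype n] [DecidableEq n]
    [NonAssocSemiring R] [Nontrivial R] {A g : Matrix n n R} (h : A * g = 1) (j : n) :
    ∃ i, g i j ≠ 0 := by
  by_contra! hcol
  have hjj := congrFun₂ h j j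
  simp [mul_apply, hcol] at hjj

theorem E_re (θ : ℝ) : (E θ).re = Real.cos θ := rfl

/-- let `t₀ ∈ (0, π)`, `a ≥ b ≥ 0` with `a² + b² = 2`, `t₁ ≥ 0`, and let
`g ∈ Sp(2)` satisfy `g·diag(E(a t₁), E(b t₁))·gᴴ = diag(E t₀, E t₀)`. Then `t₁ ≥ t₀`. -/
theorem geodesic_length_lower_bound
    (t₀ : ℝ) (ht₀ : t₀ ∈ Set.Ioo 0 π) (a b : ℝ) (hab : a ≥ b) (hb : b ≥ 0)
    (habs : a ^ 2 + b ^ 2 = 2) (t₁ : ℝ) (ht₁ : 0 ≤ t₁)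
    (g : Matrix (Fin 2) (Fin 2) (Quaternion ℝ)) (hg : gᴴ * g = 1)
    (h : g * Matrix.diagonal ![E (a * t₁), E (b * t₁)] * gᴴ
        = Matrix.diagonal ![E t₀, E t₀]) :
    t₁ ≥ t₀ := by
  by_contra! hlt
  obtain ⟨ht₀pos, ht₀pi⟩ := ht₀
  have hb1 : b ≤ 1 := by nlinarith
  have hcomm := mul_eq_mul_of_mul_mul_eq hg h
  obtain ⟨i, hi⟩ := exists_apply_ne_zero_of_mul_eq_one hg 1
  have hentry : g i 1 * E (b * t₁) = E t₀ * g i 1 := by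
    have hi1 := congrFun₂ hcomm i 1
    fin_cases i <;> simpa [mul_diagonal, diagonal_mul] using hi1
  have hcos : Real.cos (b * t₁) = Real.cos t₀ := by
    simpa only [E_re] using Quaternion.re_eq_of_mul_eq_mul hi hentry
  have hbt₁ : b * t₁ = t₀ :=
    injOn_cos ⟨by positivity, by nlinarith⟩ ⟨ht₀pos.le, ht₀pi.le⟩ hcos
  nlinarith
end

section
/- Let t₀ ∈ (0, π), let a ≥ b ≥ 0 be real numbers with a² + b² = 2, and let g ∈ Sp(2) satisfy g·diag(E(a·t₀), E(b·t₀))·gᴴ = diag(E(t₀), E(t₀)). Then a = b = 1 and g commutes with v = diag(i, i). -/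
/-!
Conjugating back, `diag(E(a t₀), E(b t₀)) = gᴴ · diag(E t₀, E t₀) · g`. The real part of the
second diagonal entry on the right is `cos t₀` times the squared norm of the second column of `g`,
which is `1`; hence `cos (b t₀) = cos t₀`. As `0 ≤ b ≤ 1`, both angles lie in `[0, π]`, where
`cos` is injective, so `b = 1` and then `a = 1`. Now `g` commutes with
`diag(E t₀, E t₀) = cos t₀ + sin t₀ · v`, and `sin t₀ ≠ 0`, so `g` commutes with `v`.
-/

open Matrix Real

namespace Quaternion

variable {R : Type*} [CommRing R]

theorem re_mul_comm_s11 (x y : Quaternion R) : (x * y).re = (y * x).re := by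
  simp only [re_mul]; ring

theorem re_star_mul_mul_self (x q : Quaternion R) : (star x * q * x).re = q.re * normSq x := by
  rw [re_mul_comm_s11, ← mul_assoc, self_mul_star, coe_mul_eq_smul, re_smul, smul_eq_mul, mul_comm]

theorem re_sum {ι : Type*} (s : Finset ι) (f : ι → Quaternion R) :
    (∑ i ∈ s, f i).re = ∑ i ∈ s, (f i).re :=
  map_sum (QuaternionAlgebra.reₗ _ _ _) f s

end Quaternion

theorem eq_mul_mul_of_mul_mul_eq {M : Type*} [Monoid M] {g u d m : M} (hg : u * g = 1)
    (h : g * d * u = m) : d = u * m * g := by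
  rw [← h, mul_assoc, mul_assoc, hg, mul_one, ← mul_assoc, hg, one_mul]

theorem commute_of_mul_mul_eq_self {M : Type*} [Monoid M] {g u m : M} (hg : u * g = 1)
    (h : g * m * u = m) : Commute g m :=
  calc g * m = g * m * u * g := by rw [mul_assoc _ u, hg, mul_one]
    _ = m * g := by rw [h]

theorem Commute.of_add_smul_right {K A : Type*} [Field K] [Ring A] [Algebra K A] {g v : A}
    {c s : K} (hs : s ≠ 0) (h : Commute g (c • 1 + s • v)) : Commute g v := by
  have hv : v = s⁻¹ • ((c • 1 + s • v) - c • 1) := by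
    rw [add_sub_cancel_left, inv_smul_smul₀ hs]
  rw [hv]
  exact (h.sub_right ((Commute.one_right g).smul_right c)).smul_right s⁻¹

theorem Matrix.re_conjTranspose_mul_diagonal_const_mul_apply {R n : Type*} [CommRing R]
    [Fintype n] [DecidableEq n] {g : Matrix n n (Quaternion R)} (hg : gᴴ * g = 1)
    (q : Quaternion R) (j : n) :
    ((gᴴ * diagonal (fun _ => q) * g : Matrix n n (Quaternion R)) j j).re = q.re := by
  have hcol : ∑ k, Quaternion.normSq (g k j) = 1 := by
    simpa [mul_apply, Quaternion.star_mul_self, Quaternion.re_sum, Quaternion.re_one] using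
      congrArg (fun X => (X j j).re) hg
  rw [mul_apply]
  simp only [mul_diagonal, conjTranspose_apply, Quaternion.re_sum,
    Quaternion.re_star_mul_mul_self, ← Finset.mul_sum, hcol, mul_one]

theorem vec_two_eq_const {α : Type*} (x : α) : ![x, x] = fun _ => x := by
  rw [vec_single_eq_const, vecCons_const]

open Quaternion in
theorem E_eq_cos_add_sin_smul_qi (θ : ℝ) : E θ = Real.cos θ • 1 + Real.sin θ • qi := by
  ext <;> simp [E] <;> simp [qi]

theorem diagonal_E_E_eq (θ : ℝ) :
    diagonal ![E θ, E θ]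
      = Real.cos θ • (1 : Matrix (Fin 2) (Fin 2) (Quaternion ℝ)) + Real.sin θ • vmat := by
  rw [vec_two_eq_const, vmat, ← diagonal_one, ← diagonal_smul, ← diagonal_smul,
    diagonal_add]
  simp only [E_eq_cos_add_sin_smul_qi]
  rfl

theorem eq_one_of_cos_mul_eq_cos {b t : ℝ} (ht : t ∈ Set.Ioo 0 π) (hb : b ∈ Set.Icc 0 1)
    (h : Real.cos (b * t) = Real.cos t) : b = 1 := by
  have hbt : b * t = t :=
    injOn_cos ⟨by nlinarith [hb.1, ht.1], by nlinarith [hb.2, ht.1, ht.2]⟩ ⟨ht.1.le, ht.2.le⟩ h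
  nlinarith [ht.1]

/-- let `t₀ ∈ (0, π)`, `a ≥ b ≥ 0` with `a² + b² = 2`, and let `g ∈ Sp(2)`
satisfy `g·diag(E(a t₀), E(b t₀))·gᴴ = diag(E t₀, E t₀)`. Then `a = b = 1` and `g`
commutes with `v = diag(i, i)`. -/
theorem uniqueness_of_minimizing_geodesic
    (t₀ : ℝ) (ht₀ : t₀ ∈ Set.Ioo 0 π) (a b : ℝ) (hab : a ≥ b) (hb : b ≥ 0)
    (habs : a ^ 2 + b ^ 2 = 2)
    (g : Matrix (Fin 2) (Fin 2) (Quaternion ℝ)) (hg : gᴴ * g = 1)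
    (h : g * Matrix.diagonal ![E (a * t₀), E (b * t₀)] * gᴴ
        = Matrix.diagonal ![E t₀, E t₀]) :
    a = 1 ∧ b = 1 ∧ g * vmat = vmat * g := by
  have hcos : Real.cos (b * t₀) = Real.cos t₀ := by
    have h11 := congrArg (fun X => (X 1 1).re) (eq_mul_mul_of_mul_mul_eq hg h)
    simpa [vec_two_eq_const, re_conjTranspose_mul_diagonal_const_mul_apply hg, E_re]
      using h11
  have hb1 : b = 1 := eq_one_of_cos_mul_eq_cos ht₀ ⟨hb, by nlinarith⟩ hcos
  have ha1 : a = 1 := by nlinarith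
  subst ha1 hb1
  rw [one_mul] at h
  have hcomm : Commute g (Real.cos t₀ • 1 + Real.sin t₀ • vmat) := by
    rw [← diagonal_E_E_eq]
    exact commute_of_mul_mul_eq_self hg h
  exact ⟨rfl, rfl, (hcomm.of_add_smul_right (sin_pos_of_pos_of_lt_pi ht₀.1 ht₀.2).ne').eq⟩
end
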